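/- arXiv:1806.02232 — 2 statements merged into one kernel-verified Lean document; each statement's English description precedes it below -/
import Mathlib

section
/- Let b = λ + iη with λ, η ∈ ℝ and λ > 0, and let 𝒫ₙ(b;x) be the complementary Romanovski–Routh polynomials defined by 𝒫₀(b;x) = 1, 𝒫₁(b;x) = x − c₁, and 𝒫ₙ₊₁(b;x) = (x − cₙ₊₁)𝒫ₙ(b;x) − dₙ₊₁(x² + 1)𝒫ₙ₋₁(b;x) for n ≥ 1, where cₙ = η/(λ+n−1) and dₙ₊₁ = n(2λ+n−1)/(4(λ+n−1)(λ+n)). Then for every n ≥ 1 and all x, (x² + 1)·𝒫ₙ''(b;x) − 2[(λ+n−1)x − η]·𝒫ₙ'(b;x) + n(n−1+2λ)·𝒫ₙ(b;x) = 0, where primes denote derivatives with respect to x. -/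
/-!
Differentiating the recurrence shows by induction the lowering relation
`𝒫ₙ₊₁' = γₙ₊₁ 𝒫ₙ` with `γₙ₊₁ = (n+1)(2λ+n)/(2(λ+n))`. Substituting it back
into the recurrence gives the raising relation
`𝒫ₙ₊₁ = (x - η/(λ+n)) 𝒫ₙ - (x² + 1) 𝒫ₙ' / (2(λ+n))`,
and the differential equation for `𝒫ₙ₊₁` is the raising relation with `𝒫ₙ₊₁'` and `𝒫ₙ₊₁''`
rewritten by the lowering relation.
-/

/-- Complementary Romanovski–Routh polynomials `𝒫ₙ(b;x)` with `b = λ + iη`,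
defined by the three-term recurrence (real version). -/
noncomputable def crr (lam eta : ℝ) : ℕ → ℝ → ℝ
  | 0, _ => 1
  | 1, x => x - eta / lam
  | n + 2, x =>
      (x - eta / (lam + n + 1)) * crr lam eta (n + 1) x -
        ((n + 1) * (2 * lam + n) / (4 * (lam + n) * (lam + n + 1))) *
          (x ^ 2 + 1) * crr lam eta n x

namespace crr

variable (lam eta : ℝ)

lemma zero_apply (x : ℝ) : crr lam eta 0 x = 1 := rfl

lemma one_apply (x : ℝ) : crr lam eta 1 x = x - eta / lam := rfl

lemma add_two_apply (n : ℕ) (x : ℝ) :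
    crr lam eta (n + 2) x =
      (x - eta / (lam + n + 1)) * crr lam eta (n + 1) x -
        ((n + 1) * (2 * lam + n) / (4 * (lam + n) * (lam + n + 1))) *
          (x ^ 2 + 1) * crr lam eta n x := rfl

lemma deriv_zero : deriv (crr lam eta 0) = 0 := deriv_const' 1

lemma deriv_one (x : ℝ) : deriv (crr lam eta 1) x = 1 := ((hasDerivAt_id x).sub_const _).deriv

lemma differentiable (n : ℕ) : Differentiable ℝ (crr lam eta n) := by
  induction n using Nat.twoStepInduction with
  | zero => exact differentiable_const 1
  | one => exact differentiable_id.sub_const _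
  | more n ih₀ ih₁ =>
    change Differentiable ℝ fun x => (x - eta / (lam + n + 1)) * crr lam eta (n + 1) x -
      ((n + 1) * (2 * lam + n) / (4 * (lam + n) * (lam + n + 1))) * (x ^ 2 + 1) * crr lam eta n x
    fun_prop

lemma deriv_add_two (n : ℕ) (x : ℝ) :
    deriv (crr lam eta (n + 2)) x =
      crr lam eta (n + 1) x + (x - eta / (lam + n + 1)) * deriv (crr lam eta (n + 1)) x -
        ((n + 1) * (2 * lam + n) / (4 * (lam + n) * (lam + n + 1))) *
          (2 * x * crr lam eta n x + (x ^ 2 + 1) * deriv (crr lam eta n) x) := by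
  have h₁ := (differentiable lam eta (n + 1) x).hasDerivAt
  have h₀ := (differentiable lam eta n x).hasDerivAt
  have h := (((hasDerivAt_id x).sub_const (eta / (lam + n + 1))).mul h₁).sub
    ((((hasDerivAt_pow 2 x).add_const 1).const_mul
      ((n + 1) * (2 * lam + n) / (4 * (lam + n) * (lam + n + 1)))).mul h₀)
  convert h.deriv using 1
  · rfl
  · simp only [id, Nat.cast_ofNat]
    ring

variable {lam}

lemma deriv_succ (hlam : 0 < lam) (n : ℕ) (x : ℝ) :
    deriv (crr lam eta (n + 1)) x = (n + 1) * (2 * lam + n) / (2 * (lam + n)) * crr lam eta n x := by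
  induction n using Nat.twoStepInduction generalizing x with
  | zero =>
    rw [deriv_one, zero_apply]
    field_simp
    ring
  | one =>
    rw [deriv_add_two, deriv_one, deriv_zero, Pi.zero_apply, one_apply, zero_apply]
    field_simp
    ring
  | more n ih₀ ih₁ =>
    rw [deriv_add_two, ih₁, ih₀, add_two_apply]
    push_cast
    field_simp
    ring

lemma deriv_succ_eq (hlam : 0 < lam) (n : ℕ) :
    deriv (crr lam eta (n + 1)) =
      fun x => (n + 1) * (2 * lam + n) / (2 * (lam + n)) * crr lam eta n x :=
  funext (deriv_succ eta hlam n)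

lemma succ_apply_eq_sub_deriv (hlam : 0 < lam) (n : ℕ) (x : ℝ) :
    crr lam eta (n + 1) x =
      (x - eta / (lam + n)) * crr lam eta n x -
        (x ^ 2 + 1) * deriv (crr lam eta n) x / (2 * (lam + n)) := by
  cases n with
  | zero =>
    simp [one_apply, zero_apply, deriv_zero]
  | succ n =>
    rw [add_two_apply, deriv_succ eta hlam]
    push_cast
    field_simp
    ring

end crr

theorem stmt4_general (lam eta : ℝ) (hlam : 0 < lam) (n : ℕ) (x : ℝ) :
    (x ^ 2 + 1) * deriv (deriv (crr lam eta n)) x -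
        2 * ((lam + n - 1) * x - eta) * deriv (crr lam eta n) x +
      n * (n - 1 + 2 * lam) * crr lam eta n x = 0 := by
  cases n with
  | zero =>
    simp [crr.deriv_zero]
  | succ n =>
    rw [crr.deriv_succ_eq eta hlam, deriv_const_mul_field', crr.succ_apply_eq_sub_deriv eta hlam]
    push_cast
    field_simp
    ring

theorem stmt4 (lam eta : ℝ) (hlam : 0 < lam) (n : ℕ) (hn : 1 ≤ n) (x : ℝ) :
    (x ^ 2 + 1) * deriv (deriv (crr lam eta n)) x -
        2 * ((lam + n - 1) * x - eta) * deriv (crr lam eta n) x +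
      n * (n - 1 + 2 * lam) * crr lam eta n x = 0 :=
  stmt4_general lam eta hlam n x
end

section
/- Let α > −1/2 be real and define the Bessel function of the first kind by its series J_α(w) = Σ_{k=0}^{∞} (−1)ᵏ (w/2)^{2k+α} / (k! · Γ(k+α+1)) for w > 0. Let 𝒫̂ₙ(α+1/2;x) denote the monic complementary Romanovski–Routh polynomials with parameter b = α + 1/2 (i.e., λ = α + 1/2, η = 0). Then for every x ∈ ℝ and every w > 0, e^{xw} · J_α(w) = (1/Γ(α+1)) · (w/2)^α · Σ_{n=0}^{∞} 𝒫̂ₙ(α+1/2; x) · wⁿ/n!. -/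
/-!
Write `J_α(w) = (w/2)^α B(w)` with `B(w) = ∑ cⱼ wʲ`, so that `B` solves Bessel's equation
`w B'' + (2α+1) B' + w B = 0`. Then `F(w) = e^{xw} B(w)` solves
`w F'' + (2α+1 - 2xw) F' + ((x²+1) w - (2α+1) x) F = 0`, and comparing coefficients shows that
`Γ(α+1) n! [wⁿ] F` satisfies the three-term recurrence of the monic polynomials `𝒫̂ₙ(α+1/2; x)`,
with the same initial values. The series identity is then the Cauchy product of the exponential
series with `B`; `B` converges absolutely because `|cⱼ| ≤ 1/(|Γ(α+1)| j!)` for `α ≥ -1/2`.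
-/

open Real

/-- Monic complementary Romanovski–Routh polynomials
`𝒫̂ₙ(b;x) = (2ⁿ(λ)ₙ/(2λ)ₙ)·𝒫ₙ(b;x)`. -/
noncomputable def crrMonic (lam eta : ℝ) (n : ℕ) (x : ℝ) : ℝ :=
  (2 ^ n * Polynomial.eval lam (ascPochhammer ℝ n) /
      Polynomial.eval (2 * lam) (ascPochhammer ℝ n)) * crr lam eta n x

/-- The Bessel function of the first kind `J_α(w)`, defined by its series for `w > 0`. -/
noncomputable def besselJ (α : ℝ) (w : ℝ) : ℝ :=
  ∑' k : ℕ, (-1 : ℝ) ^ k * (w / 2) ^ (2 * (k : ℝ) + α) /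
    (Nat.factorial k * Real.Gamma (k + α + 1))

open PowerSeries
open scoped Nat

section RomanovskiRouth

variable {lam : ℝ} (eta : ℝ)

theorem crrMonic_zero (x : ℝ) : crrMonic lam eta 0 x = 1 := by
  simp [crrMonic, crr]

theorem crrMonic_one (hlam : lam ≠ 0) (x : ℝ) : crrMonic lam eta 1 x = x - eta / lam := by
  simp [crrMonic, crr, hlam]

theorem crrMonic_add_two (hlam : 0 < lam) (n : ℕ) (x : ℝ) :
    (2 * lam + n + 1) * crrMonic lam eta (n + 2) x =
      2 * ((lam + n + 1) * x - eta) * crrMonic lam eta (n + 1) x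
        - (n + 1) * (x ^ 2 + 1) * crrMonic lam eta n x := by
  have hpoch : 0 < (ascPochhammer ℝ n).eval lam := ascPochhammer_pos n lam hlam
  have hpoch2 : 0 < (ascPochhammer ℝ n).eval (2 * lam) :=
    ascPochhammer_pos n (2 * lam) (by linarith)
  have hlam_n : (0 : ℝ) < lam + n := by positivity
  simp only [crrMonic, crr, ascPochhammer_succ_eval]
  push_cast
  field_simp
  ring

end RomanovskiRouth

open Finset in
theorem hasSum_coeff_mul_mul_pow {R : Type*} [NormedCommRing R] [CompleteSpace R]
    {f g : R⟦X⟧} {w : R} (hf : Summable fun n => ‖coeff n f * w ^ n‖)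
    (hg : Summable fun n => ‖coeff n g * w ^ n‖) :
    HasSum (fun n => coeff n (f * g) * w ^ n)
      ((∑' n, coeff n f * w ^ n) * ∑' n, coeff n g * w ^ n) := by
  have hcauchy : (fun n => coeff n (f * g) * w ^ n) = fun n =>
      ∑ kl ∈ antidiagonal n, coeff kl.1 f * w ^ kl.1 * (coeff kl.2 g * w ^ kl.2) := by
    ext n
    rw [coeff_mul, sum_mul]
    refine sum_congr rfl fun kl hkl => ?_
    rw [← mem_antidiagonal.mp hkl, pow_add]
    ring
  rw [hcauchy, tsum_mul_tsum_eq_tsum_sum_antidiagonal_of_summable_norm hf hg]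
  exact (summable_norm_sum_mul_antidiagonal_of_summable_norm hf hg).of_norm.hasSum

noncomputable def expPowerSeries (x : ℝ) : ℝ⟦X⟧ := mk fun n => x ^ n / n !

theorem derivative_expPowerSeries (x : ℝ) :
    d⁄dX ℝ (expPowerSeries x) = C x * expPowerSeries x := by
  ext n
  simp only [expPowerSeries, coeff_derivative, coeff_C_mul, coeff_mk, Nat.factorial_succ]
  push_cast
  field_simp
  ring

theorem hasSum_coeff_expPowerSeries_mul_pow (x w : ℝ) :
    HasSum (fun n => coeff n (expPowerSeries x) * w ^ n) (Real.exp (x * w)) := by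
  have hterm : (fun n => coeff n (expPowerSeries x) * w ^ n) = fun n => (x * w) ^ n / n ! := by
    ext n
    simp only [expPowerSeries, coeff_mk]
    ring
  rw [hterm, Real.exp_eq_exp_ℝ]
  exact NormedSpace.expSeries_div_hasSum_exp (x * w)

theorem summable_norm_coeff_expPowerSeries_mul_pow (x w : ℝ) :
    Summable fun n => ‖coeff n (expPowerSeries x) * w ^ n‖ := by
  convert Real.summable_pow_div_factorial (|x| * |w|) using 2 with n
  simp [expPowerSeries, mul_pow, div_mul_eq_mul_div]

/-- Taylor coefficients of `(w/2)^(-α) J_α(w)`; the recursion is Bessel's equation read off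
coefficientwise. -/
noncomputable def besselCoeff (α : ℝ) : ℕ → ℝ
  | 0 => (Real.Gamma (α + 1))⁻¹
  | 1 => 0
  | j + 2 => -besselCoeff α j / ((j + 2) * (j + 2 * α + 2))

noncomputable def besselSeries (α : ℝ) : ℝ⟦X⟧ := mk (besselCoeff α)

noncomputable def crrGenSeries (α x : ℝ) : ℝ⟦X⟧ := expPowerSeries x * besselSeries α

section Bessel

variable {α : ℝ}

theorem besselCoeff_two_mul (hα : -1 < α) (k : ℕ) :
    besselCoeff α (2 * k) = (-1) ^ k / (4 ^ k * k ! * Real.Gamma (k + α + 1)) := by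
  induction k with
  | zero => simp [besselCoeff]
  | succ k ih =>
    have hk : (0 : ℝ) < k + α + 1 := by linarith [k.cast_nonneg (α := ℝ)]
    rw [show 2 * (k + 1) = 2 * k + 2 by ring, besselCoeff, ih, Nat.factorial_succ]
    push_cast
    rw [show (k : ℝ) + 1 + α + 1 = (k + α + 1) + 1 by ring, Real.Gamma_add_one hk.ne']
    have hΓ := (Real.Gamma_pos_of_pos hk).ne'
    field_simp
    ring

theorem besselCoeff_two_mul_add_one (k : ℕ) : besselCoeff α (2 * k + 1) = 0 := by
  induction k with
  | zero => rfl
  | succ k ih => rw [show 2 * (k + 1) + 1 = 2 * k + 1 + 2 by ring, besselCoeff, ih]; simp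

theorem abs_besselCoeff_le (hα : -(1 / 2) ≤ α) (j : ℕ) :
    |besselCoeff α j| ≤ |Real.Gamma (α + 1)|⁻¹ / j ! := by
  induction j using Nat.twoStepInduction with
  | zero => simp [besselCoeff]
  | one => simp [besselCoeff]
  | more j ih _ =>
    have hj : (0 : ℝ) < (j + 2) * (j + 1) := by positivity
    calc |besselCoeff α (j + 2)| = |besselCoeff α j| / ((j + 2) * (j + 2 * α + 2)) := by
          rw [besselCoeff, abs_div, abs_neg, abs_of_pos (a := (_ + 2) * _) (by nlinarith)]
      _ ≤ |besselCoeff α j| / ((j + 2) * (j + 1)) :=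
          div_le_div_of_nonneg_left (abs_nonneg _) hj
            (mul_le_mul_of_nonneg_left (by linarith) (by positivity))
      _ ≤ |Real.Gamma (α + 1)|⁻¹ / j ! / ((j + 2) * (j + 1)) := by gcongr
      _ = |Real.Gamma (α + 1)|⁻¹ / (j + 2) ! := by
          rw [Nat.factorial_succ, Nat.factorial_succ]; push_cast; field_simp; ring

theorem summable_norm_coeff_besselSeries_mul_pow (hα : -(1 / 2) ≤ α) (w : ℝ) :
    Summable fun n => ‖coeff n (besselSeries α) * w ^ n‖ := by
  refine ((Real.summable_pow_div_factorial |w|).mul_left |Real.Gamma (α + 1)|⁻¹).of_nonneg_of_le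
    (fun n => norm_nonneg _) fun n => ?_
  rw [besselSeries, coeff_mk, norm_mul, norm_pow, Real.norm_eq_abs, Real.norm_eq_abs,
    mul_div_assoc', mul_div_right_comm]
  exact mul_le_mul_of_nonneg_right (abs_besselCoeff_le hα n) (by positivity)

theorem besselJ_eq_tsum {w : ℝ} (hα : -1 < α) (hw : 0 < w) :
    besselJ α w = (w / 2) ^ α * ∑' n, coeff n (besselSeries α) * w ^ n := by
  have hodd : Function.support (fun n => coeff n (besselSeries α) * w ^ n)
      ⊆ Set.range (2 * ·) := by
    intro n hn
    obtain ⟨k, rfl | rfl⟩ := Nat.even_or_odd' n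
    · exact ⟨k, rfl⟩
    · simp [besselSeries, besselCoeff_two_mul_add_one] at hn
  rw [besselJ, ← (mul_right_injective₀ two_ne_zero).tsum_eq hodd, ← tsum_mul_left]
  refine tsum_congr fun k => ?_
  rw [besselSeries, coeff_mk, besselCoeff_two_mul hα, Real.rpow_add (by positivity),
    show (2 * k : ℝ) = (2 * k : ℕ) by push_cast; ring, Real.rpow_natCast, div_pow, pow_mul, pow_mul]
  have hΓ : Real.Gamma (k + α + 1) ≠ 0 :=
    (Real.Gamma_pos_of_pos (by linarith [k.cast_nonneg (α := ℝ)])).ne'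
  field_simp
  ring

theorem besselSeries_ode (hα : -1 < α) :
    X * d⁄dX ℝ (d⁄dX ℝ (besselSeries α)) + C (2 * α + 1) * d⁄dX ℝ (besselSeries α)
      + X * besselSeries α = 0 := by
  ext (_ | n)
  · rw [map_add, map_add, coeff_zero_X_mul, coeff_zero_X_mul, coeff_C_mul, coeff_derivative]
    simp [besselSeries, besselCoeff]
  · have hpos : (0 : ℝ) < n + 2 * α + 2 := by linarith [n.cast_nonneg (α := ℝ)]
    rw [map_add, map_add, coeff_succ_X_mul, coeff_succ_X_mul, coeff_C_mul]
    simp only [coeff_derivative, besselSeries, coeff_mk, besselCoeff, map_zero]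
    push_cast
    field_simp
    ring

theorem crrGenSeries_ode (hα : -1 < α) (x : ℝ) :
    X * d⁄dX ℝ (d⁄dX ℝ (crrGenSeries α x)) + C (2 * α + 1) * d⁄dX ℝ (crrGenSeries α x)
      - C (2 * x) * (X * d⁄dX ℝ (crrGenSeries α x)) + C (x ^ 2 + 1) * (X * crrGenSeries α x)
      - C ((2 * α + 1) * x) * crrGenSeries α x = 0 := by
  have hE := derivative_expPowerSeries x
  have hB := besselSeries_ode hα
  simp only [crrGenSeries, Derivation.leibniz, smul_eq_mul, map_add, hE, derivative_C]
  simp only [map_add, map_mul, map_pow, map_ofNat, map_one] at hB ⊢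
  linear_combination expPowerSeries x * hB

theorem coeff_crrGenSeries_add_two (hα : -1 < α) (x : ℝ) (n : ℕ) :
    (n + 2) * (n + 2 * α + 2) * coeff (n + 2) (crrGenSeries α x)
      = (2 * n + 2 * α + 3) * x * coeff (n + 1) (crrGenSeries α x)
        - (x ^ 2 + 1) * coeff n (crrGenSeries α x) := by
  have h := congrArg (coeff (n + 1)) (crrGenSeries_ode hα x)
  simp only [LinearMap.map_add, LinearMap.map_sub, coeff_succ_X_mul, coeff_C_mul,
    coeff_derivative, map_zero] at h
  push_cast at h
  linear_combination h

theorem crrMonic_eq_coeff_crrGenSeries (hα : -(1 / 2) < α) (x : ℝ) (n : ℕ) :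
    crrMonic (α + 1 / 2) 0 n x = Real.Gamma (α + 1) * n ! * coeff n (crrGenSeries α x) := by
  have hΓ : Real.Gamma (α + 1) ≠ 0 := (Real.Gamma_pos_of_pos (by linarith)).ne'
  induction n using Nat.twoStepInduction with
  | zero =>
    simp [crrMonic_zero, crrGenSeries, expPowerSeries, besselSeries, besselCoeff, hΓ]
  | one =>
    rw [crrMonic_one _ (by linarith), crrGenSeries, coeff_mul, Finset.Nat.sum_antidiagonal_succ,
      Finset.Nat.antidiagonal_zero, Finset.sum_singleton]
    simp only [expPowerSeries, besselSeries, coeff_mk, besselCoeff, zero_div, sub_zero]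
    field_simp
    simp
  | more n ih ih1 =>
    have hP := crrMonic_add_two 0 (lam := α + 1 / 2) (by linarith) n x
    have ha := coeff_crrGenSeries_add_two (by linarith : -1 < α) x n
    have hpos : (0 : ℝ) < n + 2 * α + 2 := by linarith [n.cast_nonneg (α := ℝ)]
    rw [ih, ih1] at hP
    apply mul_left_cancel₀ hpos.ne'
    simp only [Nat.factorial_succ] at hP ⊢
    push_cast at hP ⊢
    linear_combination hP - Real.Gamma (α + 1) * (n + 1) * n ! * ha

end Bessel

theorem stmt15 (α : ℝ) (hα : -(1 / 2) < α) (x : ℝ) (w : ℝ) (hw : 0 < w) :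
    HasSum
      (fun n : ℕ =>
        (1 / Real.Gamma (α + 1)) * (w / 2) ^ α *
          (crrMonic (α + 1 / 2) 0 n x * w ^ n / Nat.factorial n))
      (Real.exp (x * w) * besselJ α w) := by
  have hΓ : Real.Gamma (α + 1) ≠ 0 := (Real.Gamma_pos_of_pos (by linarith)).ne'
  have hprod := hasSum_coeff_mul_mul_pow (summable_norm_coeff_expPowerSeries_mul_pow x w)
    (summable_norm_coeff_besselSeries_mul_pow hα.le w)
  rw [(hasSum_coeff_expPowerSeries_mul_pow x w).tsum_eq] at hprod
  rw [besselJ_eq_tsum (by linarith) hw, mul_left_comm]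
  refine (hprod.mul_left ((w / 2) ^ α)).congr_fun fun n => ?_
  rw [crrMonic_eq_coeff_crrGenSeries hα, crrGenSeries]
  field_simp
end
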